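/- Let R be an algebra over a field F such that the group of units U(R) contains an ω-subgroup. If every element of the FC-subring ∇(R) is algebraic over F, then the FC-radical ΔU is a nilpotent group of nilpotency class at most 2. -/

import Mathlib

/-!
Write `[x, y] = xy - yx`. The ω-property is used through a pigeonhole argument: if, on the infinite
set `H ∩ K` with `K` of finite index in `U(R)`, the map `d ↦ d[x, y]` factors through a finite
set, then `(1 - d'⁻¹d)[x, y] = 0` for infinitely many `d'⁻¹d ∈ H`, so `[x, y] = 0`. With cosets
of centralizers as the finite set, reached through the units `1 + dn` (`n` nilpotent) or
`1 + e(dy)(1 - e)` (`e` idempotent), this shows that nilpotent elements of `∇(R)` commute with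
`∇(R)` (first when `n²` commutes, then by halving exponents) and that idempotents of `∇(R)` are
central.

For `u, v ∈ ΔU` the commutator `k = u⁻¹v⁻¹uv` satisfies `k - 1 = u⁻¹v⁻¹[u, v]`. Once `[u, v]` is
nilpotent, it commutes with `u⁻¹v⁻¹`, so `k - 1` is a nilpotent element of `∇(R)` and commutes
with every `w ∈ ΔU`. Over an infinite field `∇(R)` is even commutative: an algebraic `b` has finite
spectrum, and two of the infinitely many units `λ - b` lie in one coset of the centralizer of
`a ∈ ∇(R)`. Over a finite field, `u` and `v` generate a finite group (finitely generated, torsion,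
with a central subgroup of finite index), hence a finite subalgebra whose idempotents are central.
A finite ring with central idempotents is a product of local rings, and a finite local ring is
commutative modulo its nilpotents by Wedderburn's little theorem.
-/

/-- The centralizer of a ring element `a` inside the unit group `Rˣ`. -/
def unitCentralizer {R : Type*} [Ring R] (a : R) : Subgroup Rˣ where
  carrier := {u : Rˣ | (u : R) * a = a * (u : R)}
  one_mem' := by simp
  mul_mem' := by
    intro u v hu hv
    have hu' : Commute ((u : Rˣ) : R) a := hu
    have hv' : Commute ((v : Rˣ) : R) a := hv
    show ((u * v : Rˣ) : R) * a = a * ((u * v : Rˣ) : R)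
    rw [Units.val_mul]
    exact hu'.mul_left hv'
  inv_mem' := by
    intro u hu
    have hu' : Commute ((u : Rˣ) : R) a := hu
    exact hu'.units_inv_left

@[simp] lemma mem_unitCentralizer {R : Type*} [Ring R] {a : R} {u : Rˣ} :
    u ∈ unitCentralizer a ↔ (u : R) * a = a * (u : R) := Iff.rfl

/-- The FC-subring `∇(R)` of a ring `R`: the set of elements whose centralizer
in the unit group has finite index. -/
def FCSubring (R : Type*) [Ring R] : Set R :=
  {a : R | (unitCentralizer a).FiniteIndex}

/-- An infinite subgroup `H ≤ Rˣ` is an ω-subgroup if for every nonzero Lie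
commutator `x*y - y*x` only finitely many elements of the form `1 - h`, `h ∈ H`,
annihilate it on the left. -/
def IsOmegaSubgroup {R : Type*} [Ring R] (H : Subgroup Rˣ) : Prop :=
  (H : Set Rˣ).Infinite ∧
    ∀ x y : R, x * y - y * x ≠ 0 →
      {h : Rˣ | h ∈ H ∧ (1 - (h : R)) * (x * y - y * x) = 0}.Finite

/-- The FC-radical `ΔU(R)` of the unit group: the subgroup of units having only
finitely many conjugates, i.e. whose centralizer has finite index. -/
def FCRadical (R : Type*) [Ring R] : Subgroup Rˣ where
  carrier := {u : Rˣ | (unitCentralizer (u : R)).FiniteIndex}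
  one_mem' := by
    have h : unitCentralizer ((1 : Rˣ) : R) = ⊤ := by
      ext u; simp
    show (unitCentralizer ((1 : Rˣ) : R)).FiniteIndex
    rw [h]
    infer_instance
  mul_mem' := by
    intro u v hu hv
    have hle : unitCentralizer (u : R) ⊓ unitCentralizer (v : R) ≤
        unitCentralizer ((u * v : Rˣ) : R) := by
      intro w hw
      have hwu : (w : R) * (u : R) = (u : R) * (w : R) := hw.1
      have hwv : (w : R) * (v : R) = (v : R) * (w : R) := hw.2
      show (w : R) * ((u * v : Rˣ) : R) = ((u * v : Rˣ) : R) * (w : R)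
      rw [Units.val_mul, ← mul_assoc, hwu, mul_assoc, hwv, ← mul_assoc]
    haveI : (unitCentralizer (u : R)).FiniteIndex := hu
    haveI : (unitCentralizer (v : R)).FiniteIndex := hv
    exact Subgroup.finiteIndex_of_le hle
  inv_mem' := by
    intro u hu
    have h : unitCentralizer ((u⁻¹ : Rˣ) : R) = unitCentralizer (u : R) := by
      ext w
      constructor
      · intro hw
        have hw' : Commute ((w : Rˣ) : R) ((u⁻¹ : Rˣ) : R) := hw
        have h2 : Commute ((w : Rˣ) : R) ((u⁻¹⁻¹ : Rˣ) : R) := hw'.units_inv_right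
        rw [inv_inv] at h2
        exact h2
      · intro hw
        have hw' : Commute ((w : Rˣ) : R) ((u : Rˣ) : R) := hw
        exact hw'.units_inv_right
    show (unitCentralizer ((u⁻¹ : Rˣ) : R)).FiniteIndex
    rw [h]
    exact hu

@[simp] lemma mem_FCRadical {R : Type*} [Ring R] {u : Rˣ} :
    u ∈ FCRadical R ↔ (unitCentralizer (u : R)).FiniteIndex := Iff.rfl

section FCSubring

variable {R : Type*} [Ring R]

theorem commute_of_mem_unitCentralizer {a : R} {u : Rˣ} (h : u ∈ unitCentralizer a) :
    Commute (u : R) a :=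
  h

theorem mem_FCSubring_of_forall_commute {a : R} (h : ∀ u : Rˣ, Commute (u : R) a) :
    a ∈ FCSubring R :=
  Subgroup.finiteIndex_of_le (H := ⊤) fun u _ => h u

theorem mem_FCSubring_of_inf_le {a b c : R} (ha : a ∈ FCSubring R) (hb : b ∈ FCSubring R)
    (h : unitCentralizer a ⊓ unitCentralizer b ≤ unitCentralizer c) : c ∈ FCSubring R :=
  have : (unitCentralizer a).FiniteIndex := ha
  have : (unitCentralizer b).FiniteIndex := hb
  Subgroup.finiteIndex_of_le h

variable (R) in
def FCSubring.toSubring : Subring R where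
  carrier := FCSubring R
  zero_mem' := mem_FCSubring_of_forall_commute fun _ => Commute.zero_right _
  one_mem' := mem_FCSubring_of_forall_commute fun _ => Commute.one_right _
  add_mem' ha hb := mem_FCSubring_of_inf_le ha hb fun _ hu =>
    (commute_of_mem_unitCentralizer hu.1).add_right hu.2
  mul_mem' ha hb := mem_FCSubring_of_inf_le ha hb fun _ hu =>
    (commute_of_mem_unitCentralizer hu.1).mul_right hu.2
  neg_mem' ha := mem_FCSubring_of_inf_le ha ha fun _ hu =>
    (commute_of_mem_unitCentralizer hu.1).neg_right

end FCSubring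

def FCSubring.toSubalgebra (F R : Type*) [CommSemiring F] [Ring R] [Algebra F R] :
    Subalgebra F R where
  toSubsemiring := (FCSubring.toSubring R).toSubsemiring
  algebraMap_mem' c := mem_FCSubring_of_forall_commute fun u =>
    Algebra.commute_algebraMap_right c (u : R)

theorem Subgroup.infinite_inf_of_finiteIndex {G : Type*} [Group G] (H K : Subgroup G)
    [Infinite H] [K.FiniteIndex] : Infinite ↥(H ⊓ K) := by
  have : Infinite (K.subgroupOf H) := not_finite_iff_infinite.mp fun hfin =>
    have := (Subgroup.finite_iff_finite_and_finiteIndex _).mpr ⟨hfin, inferInstance⟩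
    not_finite H
  exact Infinite.of_injective (fun x : K.subgroupOf H => (⟨x.1.1, x.1.2, x.2⟩ : ↥(H ⊓ K)))
    fun x y hxy => Subtype.ext (Subtype.ext (congrArg (fun z : ↥(H ⊓ K) => (z : G)) hxy))

theorem Subgroup.finite_closure_of_forall_commute {G : Type*} [Group G] {s : Set G}
    (hs : s.Finite) (K : Subgroup G) [K.FiniteIndex] (hK : ∀ k ∈ K, ∀ g ∈ s, Commute k g)
    (htors : ∀ g ∈ closure s, IsOfFinOrder g) : Finite (closure s) := by
  have : Finite s := hs.to_subtype
  let Z := K.subgroupOf (closure s)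
  have hZ (z z' : Z) : z * z' = z' * z := by
    have hz : ((z : closure s) : G) ∈ centralizer (closure s : Set G) := by
      rw [centralizer_closure]
      exact fun g hg => (hK _ z.2 g hg).eq.symm
    exact Subtype.ext (Subtype.ext (hz _ (z' : closure s).2).symm)
  let : CommGroup Z := { mul_comm := hZ }
  have : Finite Z := CommGroup.finite_of_fg_isMulTorsion Z fun z =>
    orderOf_pos_iff.mp <| by
      simpa only [Subgroup.orderOf_coe] using (htors _ (z : closure s).2).orderOf_pos
  exact (finite_iff_finite_and_finiteIndex Z).mpr ⟨this, inferInstance⟩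

section FiniteRing

theorem exists_isIdempotentElem_pow {M : Type*} [Monoid M] [Finite M] (x : M) :
    ∃ n ≠ 0, IsIdempotentElem (x ^ n) := by
  obtain ⟨a, b, hne, hab⟩ := Finite.exists_ne_map_eq_of_infinite (fun n : ℕ => x ^ (n + 1))
  wlog hlt : a < b generalizing a b
  · exact this b a hne.symm hab.symm (by omega)
  have hper : ∀ j m, a + 1 ≤ m → x ^ (m + j * (b - a)) = x ^ m := by
    intro j
    induction j with
    | zero => simp
    | succ j ih =>
      intro m hm
      calc x ^ (m + (j + 1) * (b - a))
            = x ^ (m - (a + 1)) * x ^ (b + 1) * x ^ (j * (b - a)) := by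
            rw [← pow_add, ← pow_add]; congr 1; rw [add_mul]; omega
        _ = x ^ (m + j * (b - a)) := by
            rw [← hab, ← pow_add, ← pow_add]; congr 1; omega
        _ = x ^ m := ih m hm
  refine ⟨(a + 1) * (b - a), Nat.mul_ne_zero (by omega) (by omega), ?_⟩
  rw [IsIdempotentElem, ← pow_add]
  exact hper (a + 1) _ (Nat.le_mul_of_pos_right _ (by omega))

theorem Pi.isNilpotent_of_forall {ι : Type*} [Finite ι] {M : ι → Type*}
    [∀ i, MonoidWithZero (M i)] {x : ∀ i, M i} (h : ∀ i, IsNilpotent (x i)) :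
    IsNilpotent x := by
  choose n hn using h
  cases nonempty_fintype ι
  exact ⟨∑ i, n i, funext fun i => pow_eq_zero_of_le
    (Finset.single_le_sum (fun _ _ => Nat.zero_le _) (Finset.mem_univ i)) (hn i)⟩

variable {A : Type*} [Ring A]

theorem isNilpotent_mul_sub_mul_of_isUnit_or_isNilpotent [Finite A] [Nontrivial A]
    (h : ∀ x : A, IsUnit x ∨ IsNilpotent x) (a b : A) : IsNilpotent (a * b - b * a) := by
  have mul_left {x y : A} (hy : IsNilpotent y) : IsNilpotent (x * y) :=
    (h _).resolve_left fun hu => (isUnit_of_mul_isUnit_right hu).not_isNilpotent hy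
  have mul_right {x y : A} (hx : IsNilpotent x) : IsNilpotent (x * y) :=
    (h _).resolve_left fun hu => (isUnit_of_mul_isUnit_left hu).not_isNilpotent hx
  have add {x y : A} (hx : IsNilpotent x) (hy : IsNilpotent y) : IsNilpotent (x + y) := by
    refine (h _).resolve_left fun hu => ?_
    obtain ⟨w, hw⟩ := hu.exists_left_inv
    have hwy : w * y = 1 - w * x := by rw [← hw, mul_add, add_sub_cancel_left]
    have hsum := ((Commute.one_right (w * x)).sub_right (Commute.refl _)).isNilpotent_add
      (mul_left hx) (hwy ▸ mul_left hy)
    rw [← hwy, ← mul_add, hw] at hsum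
    exact not_isNilpotent_one hsum
  let N : TwoSidedIdeal A := .mk' {x | IsNilpotent x} .zero add .neg mul_left mul_right
  let f := N.ringCon.mk'
  have hker (x : A) : f x = 0 ↔ IsNilpotent x := by
    rw [← TwoSidedIdeal.mem_ker, TwoSidedIdeal.ker_ringCon_mk']
    exact TwoSidedIdeal.mem_mk' ..
  have hf : Function.Surjective f := N.ringCon.mk'_surjective
  have : Nontrivial N.ringCon.Quotient :=
    ⟨⟨f 1, f 0, fun h01 => not_isNilpotent_one ((hker 1).mp (by rw [h01, map_zero]))⟩⟩
  have : NoZeroDivisors N.ringCon.Quotient := by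
    refine ⟨fun {p q} hpq => ?_⟩
    obtain ⟨x, rfl⟩ := hf p
    obtain ⟨y, rfl⟩ := hf q
    rw [← map_mul, hker] at hpq
    rw [hker, hker]
    refine (h x).symm.imp id fun hx => ?_
    simpa [← mul_assoc] using mul_left (x := hx.unit⁻¹.val) hpq
  have : IsDomain N.ringCon.Quotient := NoZeroDivisors.to_isDomain _
  have : Finite N.ringCon.Quotient := Finite.of_surjective f hf
  have hcomm := (Finite.isDomain_to_isField N.ringCon.Quotient).mul_comm (f a) (f b)
  rw [← hker, map_sub, map_mul, map_mul, hcomm, sub_self]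

theorem IsIdempotentElem.card_corner_lt [Finite A] {e : A} (he : IsIdempotentElem e)
    (h1 : e ≠ 1) : Nat.card he.Corner < Nat.card A :=
  Finite.card_subtype_lt (x := 1 - e) fun hmem => by
    have h := ((Subsemigroup.mem_corner_iff he).mp hmem).1
    rw [mul_sub, mul_one, he.eq, sub_self] at h
    exact h1 (sub_eq_zero.mp h.symm).symm

theorem IsIdempotentElem.isMulCentral_of_corner {e : A} (he : IsIdempotentElem e)
    (hA : ∀ f : A, IsIdempotentElem f → IsMulCentral f) (f : he.Corner)
    (hf : IsIdempotentElem f) : IsMulCentral f :=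
  Semigroup.mem_center_iff.mpr fun g =>
    Subtype.ext (Semigroup.mem_center_iff.mp (hA f.1 (congrArg Subtype.val hf)) g.1)

theorem isNilpotent_mul_sub_mul_of_finite [Finite A]
    (hA : ∀ e : A, IsIdempotentElem e → IsMulCentral e) (a b : A) :
    IsNilpotent (a * b - b * a) := by
  induction hn : Nat.card A using Nat.strong_induction_on generalizing A with
  | _ n ih =>
  by_cases htriv : ∃ e : A, IsIdempotentElem e ∧ e ≠ 0 ∧ e ≠ 1
  · obtain ⟨e, he, he0, he1⟩ := htriv
    have hpair := CompleteOrthogonalIdempotents.of_isIdempotentElem he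
    let φ := hpair.ringEquivOfIsMulCentral fun i => hA _ (hpair.idem i)
    have hne1 : ∀ i, ![e, 1 - e] i ≠ 1 := by
      intro i; fin_cases i
      · exact he1
      · simpa using he0
    have hφ : IsNilpotent (φ a * φ b - φ b * φ a) := Pi.isNilpotent_of_forall fun i =>
      have : Finite (hpair.idem i).Corner := Subtype.finite
      ih _ (hn ▸ (hpair.idem i).card_corner_lt (hne1 i))
        ((hpair.idem i).isMulCentral_of_corner hA) _ _ rfl
    simpa using hφ.map φ.symm
  · push Not at htriv
    rcases subsingleton_or_nontrivial A with hA0 | hA0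
    · exact ⟨1, Subsingleton.elim _ _⟩
    refine isNilpotent_mul_sub_mul_of_isUnit_or_isNilpotent (fun x => ?_) a b
    obtain ⟨k, hk0, hk⟩ := exists_isIdempotentElem_pow x
    by_cases hx : x ^ k = 0
    · exact Or.inr ⟨k, hx⟩
    · exact Or.inl (IsUnit.of_pow_eq_one (htriv _ hk hx) hk0)

end FiniteRing

section Peirce

variable {R : Type*} [Ring R] {e : R}

theorem IsIdempotentElem.peirce_mul_peirce (he : IsIdempotentElem e) (z z' : R) :
    e * z * (1 - e) * (e * z' * (1 - e)) = 0 := by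
  simp only [mul_assoc]
  rw [← mul_assoc (1 - e) e, he.one_sub_mul_self, zero_mul, mul_zero, mul_zero]

def IsIdempotentElem.peirceUnit (he : IsIdempotentElem e) (z : R) : Rˣ where
  val := 1 + e * z * (1 - e)
  inv := 1 - e * z * (1 - e)
  val_inv := by
    rw [mul_sub, mul_one, add_mul, one_mul, he.peirce_mul_peirce, add_zero, add_sub_cancel_right]
  inv_val := by
    rw [mul_add, mul_one, sub_mul, one_mul, he.peirce_mul_peirce, sub_zero, sub_add_cancel]

theorem IsIdempotentElem.peirce_eq_of_mem_unitCentralizer (he : IsIdempotentElem e) {z z' : R}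
    (h : (he.peirceUnit z)⁻¹ * he.peirceUnit z' ∈ unitCentralizer e) :
    e * z * (1 - e) = e * z' * (1 - e) := by
  have hval : (((he.peirceUnit z)⁻¹ * he.peirceUnit z' : Rˣ) : R) =
      1 + (e * z' * (1 - e) - e * z * (1 - e)) := by
    change (1 - e * z * (1 - e)) * (1 + e * z' * (1 - e)) = _
    rw [sub_mul, one_mul, mul_add, mul_one, he.peirce_mul_peirce, add_zero]
    abel
  have hleft (y : R) : e * (e * y * (1 - e)) = e * y * (1 - e) := by
    rw [← mul_assoc, ← mul_assoc, he.eq]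
  have hright (y : R) : e * y * (1 - e) * e = 0 := by
    rw [mul_assoc, he.one_sub_mul_self, mul_zero]
  have h' := (mem_unitCentralizer.mp h).symm
  rw [hval, mul_add, add_mul, mul_one, one_mul, mul_sub, sub_mul, hleft, hleft, hright, hright,
    sub_zero, add_right_inj] at h'
  exact (sub_eq_zero.mp h').symm

end Peirce

theorem Commute.sub_of_inv_mul {R : Type*} [Ring R] {b x x' : R} {u u' : Rˣ}
    (hu : (u : R) = 1 + x) (hu' : (u' : R) = 1 + x') (h : Commute ((u⁻¹ * u' : Rˣ) : R) b)
    (hx : Commute (x * x) b) (hxx' : Commute (x * x') b) : Commute (x' - x) b := by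
  set A : R := ((u⁻¹ * u' : Rˣ) : R)
  have hinv : ((u⁻¹ : Rˣ) : R) = 1 - x + x * x * (u⁻¹ : Rˣ) := by
    calc ((u⁻¹ : Rˣ) : R) = (1 - x) * ((1 + x) * (u⁻¹ : Rˣ)) + x * x * (u⁻¹ : Rˣ) := by
          noncomm_ring
      _ = 1 - x + x * x * (u⁻¹ : Rˣ) := by rw [← hu, Units.mul_inv, mul_one]
  have hA : A = (1 - x) * (1 + x') + x * x * A := by
    simp only [A, Units.val_mul, hu']
    conv_lhs => rw [hinv]
    noncomm_ring
  have hsplit : x' - x = A - x * x * A - 1 + x * x' := by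
    calc x' - x = (1 - x) * (1 + x') - 1 + x * x' := by noncomm_ring
      _ = A - x * x * A - 1 + x * x' := by rw [eq_sub_of_add_eq hA.symm]
  rw [hsplit]
  exact ((h.sub_left (hx.mul_left h)).sub_left (Commute.one_left b)).add_left hxx'

namespace IsOmegaSubgroup

variable {R : Type*} [Ring R] {H : Subgroup Rˣ}

theorem commute_of_factors_through_finite (hH : IsOmegaSubgroup H) (K : Subgroup Rˣ)
    [K.FiniteIndex] {α : Type*} [Finite α] (f : ↥(H ⊓ K) → α) {x y : R}
    (hf : ∀ d d', f d = f d' →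
      ((d : Rˣ) : R) * (x * y - y * x) = ((d' : Rˣ) : R) * (x * y - y * x)) :
    Commute x y := by
  have : Infinite H := hH.1.to_subtype
  have := Subgroup.infinite_inf_of_finiteIndex H K
  by_contra hne
  obtain ⟨q, hq⟩ := Finite.exists_infinite_fiber f
  obtain ⟨d₀, hd₀⟩ := (Infinite.nonempty (f ⁻¹' {q})).some
  refine (hH.2 x y (sub_ne_zero.mpr hne)).not_infinite <|
    Set.infinite_of_injective_forall_mem
      (f := fun d : f ⁻¹' {q} => (d₀ : Rˣ)⁻¹ * d.1) ?_ ?_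
  · intro d d' h
    exact Subtype.ext (Subtype.ext (mul_left_cancel h))
  · intro d
    refine ⟨mul_mem (inv_mem d₀.2.1) d.1.2.1, ?_⟩
    rw [Units.val_mul, sub_mul, one_mul, mul_assoc, hf _ _ (d.2.trans hd₀.symm),
      Units.inv_mul_cancel_left, sub_self]

theorem mul_mul_one_sub_eq_zero (hH : IsOmegaSubgroup H) {e : R} (he : e ∈ FCSubring R)
    (hidem : IsIdempotentElem e) (y : R) : e * y * (1 - e) = 0 := by
  have : (unitCentralizer e).FiniteIndex := he
  have hy : y * (1 - e) * e = 0 := by rw [mul_assoc, hidem.one_sub_mul_self, mul_zero]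
  have hcomm := hH.commute_of_factors_through_finite (unitCentralizer e)
    (fun d => (hidem.peirceUnit ((d : Rˣ) * y) : Rˣ ⧸ unitCentralizer e)) (x := e)
    (y := y * (1 - e)) fun d d' hdd' => by
      have hexpand (c : ↥(H ⊓ unitCentralizer e)) :
          ((c : Rˣ) : R) * (e * (y * (1 - e)) - y * (1 - e) * e) =
            e * ((c : Rˣ) * y) * (1 - e) := by
        rw [hy, sub_zero, ← mul_assoc, (commute_of_mem_unitCentralizer c.2.2).eq]
        simp only [mul_assoc]
      rw [hexpand, hexpand, hidem.peirce_eq_of_mem_unitCentralizer (QuotientGroup.eq.mp hdd')]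
  rw [mul_assoc, hcomm.eq, hy]

theorem commute_of_isIdempotentElem (hH : IsOmegaSubgroup H) {e : R} (he : e ∈ FCSubring R)
    (hidem : IsIdempotentElem e) (r : R) : Commute e r := by
  have h₁ := hH.mul_mul_one_sub_eq_zero he hidem r
  have h₂ := hH.mul_mul_one_sub_eq_zero ((FCSubring.toSubring R).sub_mem
    (FCSubring.toSubring R).one_mem he) hidem.one_sub r
  rw [sub_sub_cancel, sub_mul, one_mul, sub_mul, sub_eq_zero] at h₂
  rw [mul_sub, mul_one, sub_eq_zero] at h₁
  exact h₁.trans h₂.symm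

theorem commute_of_commute_mul_self (hH : IsOmegaSubgroup H) {n b : R}
    (hn : n ∈ FCSubring R) (hb : b ∈ FCSubring R) (hnil : IsNilpotent n)
    (hsq : Commute (n * n) b) : Commute n b := by
  have : (unitCentralizer n).FiniteIndex := hn
  have : (unitCentralizer b).FiniteIndex := hb
  have hunit (d : ↥(H ⊓ (unitCentralizer n ⊓ unitCentralizer b))) :
      IsUnit (1 + (d : Rˣ) * n) :=
    ((commute_of_mem_unitCentralizer d.2.2.1).isNilpotent_mul_left hnil).isUnit_one_add
  refine hH.commute_of_factors_through_finite (unitCentralizer n ⊓ unitCentralizer b)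
    (fun d => ((hunit d).unit : Rˣ ⧸ unitCentralizer b)) fun d d' hdd' => ?_
  have hdn := commute_of_mem_unitCentralizer d.2.2.1
  have hdb := commute_of_mem_unitCentralizer d.2.2.2
  have hd'n := commute_of_mem_unitCentralizer d'.2.2.1
  have hd'b := commute_of_mem_unitCentralizer d'.2.2.2
  have hsub := Commute.sub_of_inv_mul (hunit d).unit_spec (hunit d').unit_spec
    (QuotientGroup.eq.mp hdd')
    (by rw [hdn.symm.mul_mul_mul_comm]; exact (hdb.mul_left hdb).mul_left hsq)
    (by rw [hd'n.symm.mul_mul_mul_comm]; exact (hdb.mul_left hd'b).mul_left hsq)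
  have hexpand (c : R) (hc : Commute c b) : c * (n * b - b * n) = c * n * b - b * (c * n) := by
    rw [mul_sub, ← mul_assoc, ← mul_assoc, ← mul_assoc, hc.eq]
  rw [hexpand _ hdb, hexpand _ hd'b]
  have := hsub.eq
  rw [sub_mul, mul_sub] at this
  exact (sub_eq_sub_iff_sub_eq_sub.mp this).symm

theorem commute_of_isNilpotent (hH : IsOmegaSubgroup H) {n b : R}
    (hn : n ∈ FCSubring R) (hb : b ∈ FCSubring R) (hnil : IsNilpotent n) : Commute n b := by
  obtain ⟨s, hs⟩ := hnil
  have key (j : ℕ) : Commute (n ^ 2 ^ (s - j)) b := by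
    induction j with
    | zero => rw [Nat.sub_zero, pow_eq_zero_of_le s.lt_two_pow_self.le hs]; exact .zero_left b
    | succ j ih =>
      rcases Nat.lt_or_ge j s with hj | hj
      · rw [show s - j = s - (j + 1) + 1 by omega, pow_succ, pow_mul, sq] at ih
        exact hH.commute_of_commute_mul_self ((FCSubring.toSubring R).pow_mem hn _) hb
          (IsNilpotent.pow_of_pos ⟨s, hs⟩ (by positivity)) ih
      · rwa [show s - (j + 1) = s - j by omega]
  simpa using key s

end IsOmegaSubgroup

section InfiniteField

variable {F R : Type*} [Field F] [Ring R] [Algebra F R]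

theorem IsAlgebraic.finite_spectrum {a : R} (ha : IsAlgebraic F a) : (spectrum F a).Finite := by
  obtain ⟨p, hp, hpa⟩ := ha
  refine (p.finite_setOfPred_isRoot hp).subset fun c hc => ?_
  have hmem := spectrum.subset_polynomial_aeval a p ⟨c, hc, rfl⟩
  rw [hpa] at hmem
  rcases subsingleton_or_nontrivial R with hR | hR
  · simp [spectrum.of_subsingleton] at hmem
  · rw [spectrum.zero_eq] at hmem
    exact hmem

theorem commute_of_mem_FCSubring_of_infinite_compl_spectrum {a b : R} (ha : a ∈ FCSubring R)
    (hb : (spectrum F b)ᶜ.Infinite) : Commute a b := by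
  have : (unitCentralizer a).FiniteIndex := ha
  have hunit (c : ↥(spectrum F b)ᶜ) : IsUnit (algebraMap F R c - b) :=
    spectrum.notMem_iff.mp c.2
  have : Infinite ↥(spectrum F b)ᶜ := hb.to_subtype
  obtain ⟨c, c', hne, hcc'⟩ := Finite.exists_ne_map_eq_of_infinite
    fun c => ((hunit c).unit : Rˣ ⧸ unitCentralizer a)
  set r := (hunit c).unit
  have hcomm := commute_of_mem_unitCentralizer (QuotientGroup.eq.mp hcc')
  have hval :
      ((r⁻¹ * (hunit c').unit : Rˣ) : R) = 1 + ((c' : F) - c) • ((r⁻¹ : Rˣ) : R) := by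
    rw [Units.val_mul, (hunit c').unit_spec, show algebraMap F R c' - b =
      r + algebraMap F R ((c' : F) - c) by rw [(hunit c).unit_spec, map_sub]; abel,
      mul_add, Units.inv_mul, Algebra.smul_def, Algebra.commutes]
  rw [hval] at hcomm
  have hsmul := (hcomm.sub_left (Commute.one_left a)).smul_left ((c' : F) - c)⁻¹
  rw [add_sub_cancel_left, inv_smul_smul₀ (sub_ne_zero.mpr (Subtype.coe_ne_coe.mpr hne.symm))]
    at hsmul
  have hb : b = algebraMap F R c - r := by rw [(hunit c).unit_spec, sub_sub_cancel]
  rw [hb]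
  exact (Algebra.commute_algebraMap_right _ a).sub_right (Commute.units_inv_left_iff.mp hsmul).symm

end InfiniteField

section FiniteField

variable {F R : Type*} [Field F] [Ring R] [Algebra F R]

theorem Units.isOfFinOrder_of_isAlgebraic [Finite F] {u : Rˣ} (hu : IsAlgebraic F (u : R)) :
    IsOfFinOrder u := by
  let S := Subalgebra.toSubmodule (Algebra.adjoin F {(u : R)})
  have : Module.Finite F S := Module.Finite.iff_fg.mpr hu.isIntegral.fg_adjoin_singleton
  have : Finite S := Module.finite_of_finite F
  by_contra hinf
  have hinj := injective_pow_iff_not_isOfFinOrder.mpr hinf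
  obtain ⟨m, m', hne, h⟩ := Finite.exists_ne_map_eq_of_infinite fun k : ℕ =>
    (⟨(u : R) ^ k, pow_mem (Algebra.self_mem_adjoin_singleton F _) k⟩ : S)
  exact hne (hinj (Units.ext (by simpa using congrArg Subtype.val h)))

theorem finite_adjoin_of_mem_FCRadical [Finite F] (halg : ∀ a ∈ FCSubring R, IsAlgebraic F a)
    {u v : Rˣ} (hu : u ∈ FCRadical R) (hv : v ∈ FCRadical R) :
    Finite (Algebra.adjoin F {(u : R), (v : R)}) := by
  let Γ := Subgroup.closure {u, v}
  have hΓ : Γ ≤ FCRadical R :=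
    (Subgroup.closure_le _).mpr (Set.insert_subset hu (Set.singleton_subset_iff.mpr hv))
  have : (unitCentralizer (u : R) ⊓ unitCentralizer (v : R)).FiniteIndex :=
    have : (unitCentralizer (u : R)).FiniteIndex := hu
    have : (unitCentralizer (v : R)).FiniteIndex := hv
    inferInstance
  have : Finite Γ := Subgroup.finite_closure_of_forall_commute (Set.toFinite _)
    (unitCentralizer (u : R) ⊓ unitCentralizer (v : R))
    (by rintro k hk g (rfl | rfl)
        exacts [Commute.units_val_iff.mp hk.1, Commute.units_val_iff.mp hk.2])
    fun g hg => Units.isOfFinOrder_of_isAlgebraic (halg _ (hΓ hg))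
  have hle : Subalgebra.toSubmodule (Algebra.adjoin F {(u : R), (v : R)}) ≤
      Submodule.span F (Units.val '' (Γ : Set Rˣ)) := by
    rw [Algebra.adjoin_eq_span]
    refine Submodule.span_mono <|
      (Submonoid.closure_le (S := Γ.toSubmonoid.map (Units.coeHom R))).mpr ?_
    rintro _ (rfl | rfl) <;> exact ⟨_, Subgroup.subset_closure (by simp), rfl⟩
  have := FiniteDimensional.span_of_finite F ((Set.toFinite (Γ : Set Rˣ)).image Units.val)
  have : Finite (Submodule.span F (Units.val '' (Γ : Set Rˣ))) := Module.finite_of_finite F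
  exact Finite.Set.subset _ hle

end FiniteField

namespace IsOmegaSubgroup

variable {F R : Type*} [Field F] [Ring R] [Algebra F R] {H : Subgroup Rˣ}

theorem isNilpotent_commutator_of_finite [Finite F] (hH : IsOmegaSubgroup H)
    (halg : ∀ a ∈ FCSubring R, IsAlgebraic F a) {u v : Rˣ} (hu : u ∈ FCRadical R)
    (hv : v ∈ FCRadical R) : IsNilpotent ((u : R) * v - v * u) := by
  let B := Algebra.adjoin F {(u : R), (v : R)}
  have := finite_adjoin_of_mem_FCRadical halg hu hv
  have hBFC : B ≤ FCSubring.toSubalgebra F R :=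
    Algebra.adjoin_le (Set.insert_subset hu (Set.singleton_subset_iff.mpr hv))
  have hB := isNilpotent_mul_sub_mul_of_finite (A := B)
    (fun e he => Semigroup.mem_center_iff.mpr fun x =>
      Subtype.ext (hH.commute_of_isIdempotentElem (hBFC e.2) (congrArg Subtype.val he) x).eq.symm)
    ⟨u, Algebra.subset_adjoin (by simp)⟩ ⟨v, Algebra.subset_adjoin (by simp)⟩
  simpa using hB.map B.val

theorem isNilpotent_commutator (hH : IsOmegaSubgroup H)
    (halg : ∀ a ∈ FCSubring R, IsAlgebraic F a) {u v : Rˣ} (hu : u ∈ FCRadical R)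
    (hv : v ∈ FCRadical R) : IsNilpotent ((u : R) * v - v * u) := by
  rcases finite_or_infinite F with hF | hF
  · exact hH.isNilpotent_commutator_of_finite halg hu hv
  · have := commute_of_mem_FCSubring_of_infinite_compl_spectrum hu
      (halg _ hv).finite_spectrum.infinite_compl
    rw [this.eq, sub_self]
    exact IsNilpotent.zero

end IsOmegaSubgroup

theorem Units.val_inv_mul_inv_mul_mul_sub_one {R : Type*} [Ring R] (u v : Rˣ) :
    ((u⁻¹ * v⁻¹ * u * v : Rˣ) : R) - 1 =
      ((u⁻¹ * v⁻¹ : Rˣ) : R) * ((u : R) * v - v * u) := by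
  simp only [Units.val_mul, mul_sub, mul_assoc, Units.inv_mul_cancel_left, Units.inv_mul]

/-- If `U(R)` contains an ω-subgroup and every element of `∇(R)` is
algebraic over `F`, then `ΔU` is nilpotent of class at most 2: every commutator of two
elements of `ΔU` is central in `ΔU`. -/
theorem fcRadical_nilpotent_of_algebraic (F : Type*) [Field F]
    (R : Type*) [Ring R] [Algebra F R]
    (H : Subgroup Rˣ) (hH : IsOmegaSubgroup H)
    (halg : ∀ a ∈ FCSubring R, IsAlgebraic F a) :
    ∀ u ∈ FCRadical R, ∀ v ∈ FCRadical R, ∀ w ∈ FCRadical R,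
      (u⁻¹ * v⁻¹ * u * v) * w = w * (u⁻¹ * v⁻¹ * u * v) := by
  intro u hu v hv w hw
  let S := FCSubring.toSubring R
  have hc : IsNilpotent ((u : R) * v - v * u) := hH.isNilpotent_commutator halg hu hv
  have hcmem : (u : R) * v - v * u ∈ S := S.sub_mem (S.mul_mem hu hv) (S.mul_mem hv hu)
  have hz : ((u⁻¹ * v⁻¹ : Rˣ) : R) ∈ S := mul_mem (inv_mem hu) (inv_mem hv)
  have hk : IsNilpotent (((u⁻¹ * v⁻¹ * u * v : Rˣ) : R) - 1) := by
    rw [Units.val_inv_mul_inv_mul_mul_sub_one]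
    exact (hH.commute_of_isNilpotent hcmem hz hc).symm.isNilpotent_mul_left hc
  have hkmem : ((u⁻¹ * v⁻¹ * u * v : Rˣ) : R) - 1 ∈ S :=
    S.sub_mem (mul_mem (mul_mem (mul_mem (inv_mem hu) (inv_mem hv)) hu) hv) S.one_mem
  have hkw := (hH.commute_of_isNilpotent hkmem hw hk).add_left (Commute.one_left _)
  rw [sub_add_cancel] at hkw
  exact Units.ext (by simpa only [Units.val_mul] using hkw.eq)
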